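/- Let Σ_x be a real n×n positive semidefinite matrix, Φ a real ℓ×n matrix, and Σ := Σ_x^{1/2}·Φᵀ·Φ·Σ_x^{1/2}. Then MMSE(σ²) tends to 0 as σ² → 0⁺ if and only if rank(Σ) = rank(Σ_x). -/

import Mathlib

/-!
Let `S` be a symmetric square root of `Sx` and `Σ = S Φᵀ Φ S`, with orthonormal eigenvectors `uᵢ`
and eigenvalues `μᵢ ≥ 0`. The push-through identity `B (σ + A B)⁻¹ = (σ + B A)⁻¹ B` turns the
MMSE into `σ · tr (S (σ + Σ)⁻¹ S) = ∑ᵢ σ / (σ + μᵢ) · ‖S uᵢ‖²`, which tends to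
`∑_{μᵢ = 0} ‖S uᵢ‖²` as `σ → 0⁺`. This limit vanishes iff `S` kills `ker Σ`. Since always
`ker Sx = ker S ⊆ ker Σ`, that means `ker Σ = ker Sx`, i.e. `rank Σ = rank Sx`.
-/

open Matrix Filter Topology

section
open scoped ComplexOrder

/-- The square root of a positive semidefinite matrix, as Mathlib defined it in December 2024
(removed since; restored here with its old definition). -/
noncomputable def Matrix.PosSemidef.sqrt {n 𝕜 : Type*} [Fintype n] [DecidableEq n] [RCLike 𝕜]
    {A : Matrix n n 𝕜} (hA : A.PosSemidef) : Matrix n n 𝕜 :=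
  hA.1.eigenvectorUnitary.1 * diagonal ((↑) ∘ (√·) ∘ hA.1.eigenvalues) *
    (star hA.1.eigenvectorUnitary : Matrix n n 𝕜)

end

open Unitary
open scoped ComplexOrder

namespace Matrix

section CommRing

variable {m n R : Type*} [Fintype m] [Fintype n] [DecidableEq m] [DecidableEq n] [CommRing R]

theorem one_sub_mul_inv_smul_one_add_mul (A : Matrix m n R) (B : Matrix n m R) {σ : R}
    (hAB : IsUnit (σ • 1 + A * B).det) (hBA : IsUnit (σ • 1 + B * A).det) :
    1 - B * (σ • 1 + A * B)⁻¹ * A = σ • (σ • 1 + B * A)⁻¹ := by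
  set C := σ • (1 : Matrix m m R) + A * B
  set D := σ • (1 : Matrix n n R) + B * A
  have hpush : B * C⁻¹ = D⁻¹ * B := by
    have hcomm : D * B = B * C := by
      simp only [C, D, Matrix.add_mul, Matrix.mul_add, smul_mul, Matrix.mul_smul, Matrix.one_mul,
        Matrix.mul_one, Matrix.mul_assoc]
    calc B * C⁻¹ = D⁻¹ * (D * B) * C⁻¹ := by rw [nonsing_inv_mul_cancel_left _ _ hBA]
      _ = D⁻¹ * B := by rw [hcomm, ← Matrix.mul_assoc, mul_nonsing_inv_cancel_right _ _ hAB]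
  calc 1 - B * C⁻¹ * A = D⁻¹ * D - D⁻¹ * (B * A) := by
        rw [nonsing_inv_mul _ hBA, hpush, Matrix.mul_assoc]
    _ = σ • D⁻¹ := by
        rw [← Matrix.mul_sub, add_sub_cancel_right, Matrix.mul_smul, Matrix.mul_one]

theorem trace_mul_diagonal_mul_transpose {k : Type*} [Fintype k] (M : Matrix k n R) (d : n → R) :
    (M * diagonal d * Mᵀ).trace = ∑ i, d i * (Mᵀ i ⬝ᵥ Mᵀ i) := by
  simp only [trace, diag, mul_apply, diagonal_apply, mul_ite, mul_zero, Finset.sum_ite_eq',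
    Finset.mem_univ, if_true, transpose_apply, dotProduct, Finset.mul_sum]
  rw [Finset.sum_comm]
  exact Finset.sum_congr rfl fun i _ => Finset.sum_congr rfl fun j _ => by ring

end CommRing

theorem rank_eq_rank_iff_ker_le {K m n k : Type*} [Field K] [Fintype n] {M : Matrix m n K}
    {N : Matrix k n K} (h : LinearMap.ker N.mulVecLin ≤ LinearMap.ker M.mulVecLin) :
    M.rank = N.rank ↔ LinearMap.ker M.mulVecLin ≤ LinearMap.ker N.mulVecLin := by
  have hM := LinearMap.finrank_range_add_finrank_ker M.mulVecLin
  have hN := LinearMap.finrank_range_add_finrank_ker N.mulVecLin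
  rw [rank, rank]
  constructor
  · intro hrank
    exact (Submodule.eq_of_le_of_finrank_eq h (by omega)).ge
  · intro hle
    have := Submodule.finrank_mono hle
    have := Submodule.finrank_mono h
    omega

theorem IsHermitian.posSemidef_mul_transpose_mul_mul {m n : Type*} [Fintype m] [Fintype n]
    {S : Matrix n n ℝ} (hS : S.IsHermitian) (Φ : Matrix m n ℝ) : (S * Φᵀ * Φ * S).PosSemidef := by
  have h := posSemidef_conjTranspose_mul_self (Φ * S)
  rwa [conjTranspose_eq_transpose_of_trivial, transpose_mul, isHermitian_iff_isSymm.mp hS,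
    ← Matrix.mul_assoc] at h

variable {n : Type*} [Fintype n] [DecidableEq n]

theorem PosSemidef.posSemidef_sqrt {𝕜 : Type*} [RCLike 𝕜] {A : Matrix n n 𝕜}
    (hA : A.PosSemidef) : hA.sqrt.PosSemidef := by
  unfold Matrix.PosSemidef.sqrt
  rw [star_eq_conjTranspose]
  refine PosSemidef.mul_mul_conjTranspose_same (posSemidef_diagonal_iff.mpr fun i => ?_) _
  simp only [Function.comp_apply]
  exact_mod_cast Real.sqrt_nonneg _

theorem PosSemidef.sqrt_mul_self {𝕜 : Type*} [RCLike 𝕜] {A : Matrix n n 𝕜} (hA : A.PosSemidef) :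
    hA.sqrt * hA.sqrt = A := by
  have hsqrt : hA.sqrt = conjStarAlgAut 𝕜 _ hA.1.eigenvectorUnitary
      (diagonal ((↑) ∘ (√·) ∘ hA.1.eigenvalues)) := rfl
  conv_rhs => rw [hA.1.spectral_theorem]
  rw [hsqrt, ← map_mul, diagonal_mul_diagonal]
  congr 2
  funext i
  simp [← RCLike.ofReal_mul, Real.mul_self_sqrt (hA.eigenvalues_nonneg i)]

theorem PosSemidef.isUnit_det_smul_one_add {A : Matrix n n ℝ} (hA : A.PosSemidef) {σ : ℝ}
    (hσ : 0 < σ) : IsUnit (σ • 1 + A).det :=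
  (isUnit_iff_isUnit_det _).mp ((PosDef.one.smul hσ).add_posSemidef hA).isUnit

namespace IsHermitian

theorem ker_mulVecLin_le_iff {𝕜 k : Type*} [RCLike 𝕜] {A : Matrix n n 𝕜} (hA : A.IsHermitian)
    (M : Matrix k n 𝕜) :
    LinearMap.ker A.mulVecLin ≤ LinearMap.ker M.mulVecLin ↔
      ∀ i, hA.eigenvalues i = 0 → M *ᵥ hA.eigenvectorBasis i = 0 := by
  simp only [SetLike.le_def, LinearMap.mem_ker, mulVecLin_apply]
  constructor
  · intro h i hi
    exact h (by rw [mulVec_eigenvectorBasis, hi, zero_smul])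
  · intro h v hv
    set U : Matrix n n 𝕜 := ↑hA.eigenvectorUnitary
    have hUU : U * star U = 1 := Unitary.mul_star_self_of_mem hA.eigenvectorUnitary.2
    set w := star U *ᵥ v
    have hμw : ∀ i, (hA.eigenvalues i : 𝕜) * w i = 0 := by
      have hdiag : diagonal (RCLike.ofReal ∘ hA.eigenvalues) *ᵥ w = star U *ᵥ (A *ᵥ v) := by
        rw [← conjStarAlgAut_star_eigenvectorUnitary, conjStarAlgAut_apply, mulVec_mulVec,
          mulVec_mulVec, coe_star, star_star, Matrix.mul_assoc _ U, hUU, Matrix.mul_one]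
      intro i
      simpa [hv, mulVec_diagonal] using congrFun hdiag i
    have hexpand : v = ∑ i, w i • ⇑(hA.eigenvectorBasis i) := by
      calc v = U *ᵥ w := by rw [mulVec_mulVec, hUU, one_mulVec]
        _ = _ := by simp [mulVec_eq_sum, U]
    rw [hexpand, mulVec_sum]
    refine Finset.sum_eq_zero fun i _ => ?_
    rw [mulVec_smul]
    by_cases hi : hA.eigenvalues i = 0
    · rw [h i hi, smul_zero]
    · rw [(mul_eq_zero.1 (hμw i)).resolve_left (by exact_mod_cast hi), zero_smul]

theorem inv_smul_one_add {A : Matrix n n ℝ} (hA : A.IsHermitian) {σ : ℝ}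
    (hσ : ∀ i, σ + hA.eigenvalues i ≠ 0) :
    (σ • 1 + A)⁻¹ = conjStarAlgAut ℝ _ hA.eigenvectorUnitary
      (diagonal fun i => (σ + hA.eigenvalues i)⁻¹) := by
  have hspec : σ • 1 + A = conjStarAlgAut ℝ _ hA.eigenvectorUnitary
      (diagonal fun i => σ + hA.eigenvalues i) := by
    conv_lhs => rw [hA.spectral_theorem]
    rw [← diagonal_add, map_add, ← smul_one_eq_diagonal, map_smul, map_one]
    rfl
  refine inv_eq_left_inv ?_
  rw [hspec, ← map_mul, diagonal_mul_diagonal, ← map_one (conjStarAlgAut ℝ _ hA.eigenvectorUnitary),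
    ← diagonal_one]
  congr 2
  funext i
  exact inv_mul_cancel₀ (hσ i)

theorem trace_mul_inv_smul_one_add_mul_transpose {k : Type*} [Fintype k] {A : Matrix n n ℝ}
    (hA : A.IsHermitian) (B : Matrix k n ℝ) {σ : ℝ} (hσ : ∀ i, σ + hA.eigenvalues i ≠ 0) :
    (B * (σ • 1 + A)⁻¹ * Bᵀ).trace = ∑ i, (σ + hA.eigenvalues i)⁻¹ *
      ((B *ᵥ hA.eigenvectorBasis i) ⬝ᵥ (B *ᵥ hA.eigenvectorBasis i)) := by
  set U : Matrix n n ℝ := ↑hA.eigenvectorUnitary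
  have hconj : B * (U * diagonal (fun i => (σ + hA.eigenvalues i)⁻¹) * star U) * Bᵀ =
      B * U * diagonal (fun i => (σ + hA.eigenvalues i)⁻¹) * (B * U)ᵀ := by
    rw [transpose_mul, star_eq_conjTranspose, conjTranspose_eq_transpose_of_trivial]
    simp only [Matrix.mul_assoc]
  have hcol : ∀ i, (B * U)ᵀ i = B *ᵥ hA.eigenvectorBasis i := fun i => by
    ext j
    simp [U, mulVec, dotProduct, mul_apply]
  rw [inv_smul_one_add hA hσ, conjStarAlgAut_apply, hconj, trace_mul_diagonal_mul_transpose]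
  simp only [hcol]

end IsHermitian

end Matrix

theorem tendsto_div_add_nhdsGT_zero (μ : ℝ) :
    Tendsto (fun σ : ℝ => σ / (σ + μ)) (𝓝[>] 0) (𝓝 (if μ = 0 then 1 else 0)) := by
  split_ifs with hμ
  · refine tendsto_const_nhds.congr' ?_
    filter_upwards [self_mem_nhdsWithin] with σ hσ
    rw [hμ, add_zero, div_self (ne_of_gt hσ)]
  · have hcont : ContinuousAt (fun σ : ℝ => σ / (σ + μ)) 0 :=
      continuousAt_id.div (continuousAt_id.add continuousAt_const) (by simpa using hμ)
    simpa using hcont.tendsto.mono_left nhdsWithin_le_nhds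

theorem tendsto_sum_div_add_mul_nhdsGT_zero_iff {ι : Type*} [Fintype ι] {μ c : ι → ℝ}
    (hc : ∀ i, 0 ≤ c i) :
    Tendsto (fun σ : ℝ => ∑ i, σ / (σ + μ i) * c i) (𝓝[>] 0) (𝓝 0) ↔ ∀ i, μ i = 0 → c i = 0 := by
  have hlim : Tendsto (fun σ : ℝ => ∑ i, σ / (σ + μ i) * c i) (𝓝[>] 0)
      (𝓝 (∑ i, (if μ i = 0 then 1 else 0) * c i)) :=
    tendsto_finsetSum _ fun i _ => (tendsto_div_add_nhdsGT_zero (μ i)).mul_const (c i)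
  have hzero : ∑ i, (if μ i = 0 then 1 else 0) * c i = 0 ↔ ∀ i, μ i = 0 → c i = 0 := by
    rw [Finset.sum_eq_zero_iff_of_nonneg fun i _ => by split_ifs <;> simp [hc i]]
    simp
  exact ⟨fun h => hzero.1 (tendsto_nhds_unique hlim h), fun h => by rwa [hzero.2 h] at hlim⟩

noncomputable def gaussianMMSE {m n : Type*} [Fintype m] [Fintype n] [DecidableEq m]
    (Sx : Matrix n n ℝ) (Φ : Matrix m n ℝ) (σ2 : ℝ) : ℝ :=
  (Sx - Sx * Φᵀ * (σ2 • (1 : Matrix m m ℝ) + Φ * Sx * Φᵀ)⁻¹ * Φ * Sx).trace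

theorem gaussianMMSE_eq_sum {m n : Type*} [Fintype m] [Fintype n] [DecidableEq m] [DecidableEq n]
    {S Sx : Matrix n n ℝ} (hS : S.IsHermitian) (hSS : S * S = Sx) (Φ : Matrix m n ℝ)
    (hSig : (S * Φᵀ * Φ * S).IsHermitian) {σ : ℝ} (hσ : 0 < σ) :
    gaussianMMSE Sx Φ σ = ∑ i, σ / (σ + hSig.eigenvalues i) *
      ((S *ᵥ hSig.eigenvectorBasis i) ⬝ᵥ (S *ᵥ hSig.eigenvectorBasis i)) := by
  subst hSS
  have hSt : Sᵀ = S := isHermitian_iff_isSymm.mp hS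
  have hSigPSD : (S * Φᵀ * Φ * S).PosSemidef := hS.posSemidef_mul_transpose_mul_mul Φ
  have hpsd : ((Φ * S) * (S * Φᵀ)).PosSemidef := by
    have h := posSemidef_self_mul_conjTranspose (Φ * S)
    rwa [conjTranspose_eq_transpose_of_trivial, transpose_mul, hSt] at h
  have hμ : ∀ i, σ + hSig.eigenvalues i ≠ 0 := fun i =>
    (add_pos_of_pos_of_nonneg hσ (hSigPSD.eigenvalues_nonneg i)).ne'
  calc gaussianMMSE (S * S) Φ σ
      = (S * (1 - (S * Φᵀ) * (σ • 1 + (Φ * S) * (S * Φᵀ))⁻¹ * (Φ * S)) * S).trace := by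
        simp only [gaussianMMSE, Matrix.mul_sub, Matrix.sub_mul, Matrix.mul_one, Matrix.mul_assoc]
    _ = σ * (S * (σ • 1 + S * Φᵀ * Φ * S)⁻¹ * Sᵀ).trace := by
        rw [one_sub_mul_inv_smul_one_add_mul _ _ (hpsd.isUnit_det_smul_one_add hσ)
          (by simpa only [← Matrix.mul_assoc] using hSigPSD.isUnit_det_smul_one_add hσ), hSt,
          Matrix.mul_smul, Matrix.smul_mul, trace_smul, smul_eq_mul]
        simp only [Matrix.mul_assoc]
    _ = _ := by
        rw [hSig.trace_mul_inv_smul_one_add_mul_transpose S hμ, Finset.mul_sum]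
        simp only [div_eq_mul_inv, mul_assoc]

/-- MMSE(σ²) → 0 as σ² → 0⁺ iff rank(Σ) = rank(Σ_x), where
Σ = Σ_x^{1/2}·Φᵀ·Φ·Σ_x^{1/2}. -/
theorem stmt_4 {n l : ℕ} (Sx : Matrix (Fin n) (Fin n) ℝ) (hSx : Sx.PosSemidef)
    (Φ : Matrix (Fin l) (Fin n) ℝ) :
    Tendsto (fun σ2 : ℝ =>
        (Sx - Sx * Φᵀ * (σ2 • (1 : Matrix (Fin l) (Fin l) ℝ) + Φ * Sx * Φᵀ)⁻¹ * Φ * Sx).trace)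
      (nhdsWithin 0 (Set.Ioi 0)) (nhds 0)
    ↔ (hSx.sqrt * Φᵀ * Φ * hSx.sqrt).rank = Sx.rank := by
  set S := hSx.sqrt
  have hS : S.IsHermitian := hSx.posSemidef_sqrt.1
  have hSS : S * S = Sx := hSx.sqrt_mul_self
  have hSig := (hS.posSemidef_mul_transpose_mul_mul Φ).1
  have hker : LinearMap.ker Sx.mulVecLin = LinearMap.ker S.mulVecLin := by
    rw [← hSS, ← ker_mulVecLin_conjTranspose_mul_self S, hS.eq]
  have hker_le : LinearMap.ker S.mulVecLin ≤ LinearMap.ker (S * Φᵀ * Φ * S).mulVecLin := by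
    rw [mulVecLin_mul]
    exact LinearMap.ker_le_ker_comp _ _
  calc Tendsto (gaussianMMSE Sx Φ) (𝓝[>] 0) (𝓝 0)
      ↔ Tendsto (fun σ => ∑ i, σ / (σ + hSig.eigenvalues i) *
          ((S *ᵥ hSig.eigenvectorBasis i) ⬝ᵥ (S *ᵥ hSig.eigenvectorBasis i))) (𝓝[>] 0) (𝓝 0) :=
        tendsto_congr' <| eventuallyEq_of_mem self_mem_nhdsWithin fun σ hσ =>
          gaussianMMSE_eq_sum hS hSS Φ hSig hσ
    _ ↔ ∀ i, hSig.eigenvalues i = 0 → S *ᵥ hSig.eigenvectorBasis i = 0 := by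
        refine (tendsto_sum_div_add_mul_nhdsGT_zero_iff fun i => ?_).trans ?_
        · exact Fintype.sum_nonneg fun _ => mul_self_nonneg _
        · simp only [dotProduct_self_eq_zero]
    _ ↔ LinearMap.ker (S * Φᵀ * Φ * S).mulVecLin ≤ LinearMap.ker S.mulVecLin :=
        (hSig.ker_mulVecLin_le_iff S).symm
    _ ↔ _ := by rw [← hker, rank_eq_rank_iff_ker_le (hker ▸ hker_le)]
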